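/- arXiv:2302.02806 — 2 statements merged into one kernel-verified Lean document; each statement's English description precedes it below -/
import Mathlib

section
/- Let P be the transition matrix of an irreducible finite Markov chain and A, B disjoint nonempty subsets of the state space. Then the system of equations q_i = 0 for i ∈ A, q_i = 1 for i ∈ B, q_i = ∑_j P_{ij} q_j for i ∉ A ∪ B has a unique solution. -/
open Finset

/-- Maximum principle: a function vanishing on `A ∪ B` and harmonic elsewhere
is ≤ 0 everywhere. -/
lemma committor_max_le {S : Type*} [Fintype S] [DecidableEq S]
    (P : S → S → ℝ) (A B : Finset S)
    (hP0 : ∀ i j, 0 ≤ P i j) (hP1 : ∀ i, ∑ j, P i j = 1)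
    (hirr : ∀ i j : S, Relation.ReflTransGen (fun a b => 0 < P a b) i j)
    (hA : A.Nonempty)
    (f : S → ℝ)
    (hz : ∀ i, i ∈ A ∪ B → f i = 0)
    (hh : ∀ i, i ∉ A ∪ B → f i = ∑ j, P i j * f j) :
    ∀ i, f i ≤ 0 := by
  obtain ⟨a, ha⟩ := hA
  have hne : (Finset.univ : Finset S).Nonempty := ⟨a, mem_univ a⟩
  set M := Finset.univ.sup' hne f with hM
  have hle : ∀ j : S, f j ≤ M := fun j => le_sup' f (mem_univ j)
  by_contra hc
  push_neg at hc
  obtain ⟨i0, hi0⟩ := hc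
  have hMpos : 0 < M := lt_of_lt_of_le hi0 (hle i0)
  have hclosed : ∀ i, f i = M → ∀ j, 0 < P i j → f j = M := by
    intro i hiM j hij
    have hiC : i ∉ A ∪ B := by
      intro h
      rw [hz i h] at hiM
      exact absurd hiM.symm (ne_of_gt hMpos)
    have hsum : ∑ k, P i k * (M - f k) = 0 := by
      have h1 : ∑ k, P i k * (M - f k) = (∑ k, P i k) * M - ∑ k, P i k * f k := by
        rw [Finset.sum_mul, ← Finset.sum_sub_distrib]
        exact Finset.sum_congr rfl (fun k _ => by ring)
      rw [h1, hP1, one_mul, ← hh i hiC, hiM, sub_self]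
    have hterm : ∀ k ∈ Finset.univ, P i k * (M - f k) = 0 := by
      rw [← Finset.sum_eq_zero_iff_of_nonneg
        (fun k _ => mul_nonneg (hP0 i k) (sub_nonneg.mpr (hle k)))]
      exact hsum
    rcases mul_eq_zero.mp (hterm j (mem_univ j)) with h | h
    · exact absurd h (ne_of_gt hij)
    · linarith [sub_eq_zero.mp h]
  obtain ⟨m, -, hm⟩ := Finset.exists_mem_eq_sup' hne f
  have hfm : f m = M := hm.symm
  have key : ∀ x y : S, Relation.ReflTransGen (fun a b => 0 < P a b) x y →
      f x = M → f y = M := by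
    intro x y h
    induction h with
    | refl => exact id
    | tail _ step ih => intro hx; exact hclosed _ (ih hx) _ step
  have hfa : f a = M := key m a (hirr m a) hfm
  have : (0:ℝ) = M := by rw [← hfa, hz a (mem_union_left B ha)]
  linarith

/-- The homogeneous committor system has only the zero solution. -/
lemma committor_homog_zero {S : Type*} [Fintype S] [DecidableEq S]
    (P : S → S → ℝ) (A B : Finset S)
    (hP0 : ∀ i j, 0 ≤ P i j) (hP1 : ∀ i, ∑ j, P i j = 1)
    (hirr : ∀ i j : S, Relation.ReflTransGen (fun a b => 0 < P a b) i j)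
    (hA : A.Nonempty)
    (f : S → ℝ)
    (hz : ∀ i, i ∈ A ∪ B → f i = 0)
    (hh : ∀ i, i ∉ A ∪ B → f i = ∑ j, P i j * f j) :
    ∀ i, f i = 0 := by
  have h1 := committor_max_le P A B hP0 hP1 hirr hA f hz hh
  have h2 := committor_max_le P A B hP0 hP1 hirr hA (fun i => -f i)
    (fun i hi => by simp [hz i hi])
    (fun i hi => by
      simp only [mul_neg, Finset.sum_neg_distrib, neg_inj]; exact hh i hi)
  intro i
  have := h2 i
  simp only [neg_nonpos] at this
  linarith [h1 i]

/-- For an irreducible row-stochastic matrix `P` and disjoint nonempty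
sets `A`, `B`, the committor system `q = 0` on `A`, `q = 1` on `B`,
`q_i = ∑_j P_{ij} q_j` elsewhere, has a unique solution. -/
theorem committor_unique {S : Type*} [Fintype S]
    (P : S → S → ℝ) (A B : Finset S)
    (hP0 : ∀ i j, 0 ≤ P i j) (hP1 : ∀ i, ∑ j, P i j = 1)
    (hirr : ∀ i j : S, Relation.ReflTransGen (fun a b => 0 < P a b) i j)
    (hAB : Disjoint A B) (hA : A.Nonempty) (hB : B.Nonempty) :
    ∃! q : S → ℝ,
      (∀ i ∈ A, q i = 0) ∧ (∀ i ∈ B, q i = 1) ∧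
        (∀ i, i ∉ A → i ∉ B → q i = ∑ j, P i j * q j) := by
  classical
  -- the linear map of the system
  let T : (S → ℝ) →ₗ[ℝ] (S → ℝ) :=
    { toFun := fun q i => q i - if i ∈ A ∪ B then 0 else ∑ j, P i j * q j
      map_add' := by
        intro x y
        funext i
        by_cases h : i ∈ A ∪ B
        · simp only [Pi.add_apply, if_pos h]; ring
        · simp only [Pi.add_apply, if_neg h, mul_add, Finset.sum_add_distrib]
          ring
      map_smul' := by
        intro c x
        funext i
        by_cases h : i ∈ A ∪ B
        · simp only [Pi.smul_apply, smul_eq_mul, RingHom.id_apply, if_pos h]; ring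
        · simp only [Pi.smul_apply, smul_eq_mul, RingHom.id_apply, if_neg h,
            mul_sub, Finset.mul_sum]
          congr 1
          exact Finset.sum_congr rfl fun j _ => by ring }
  have hTinj : Function.Injective T := by
    rw [← LinearMap.ker_eq_bot, LinearMap.ker_eq_bot']
    intro f hf
    have hf' : ∀ i, f i - (if i ∈ A ∪ B then 0 else ∑ j, P i j * f j) = 0 :=
      fun i => congrFun hf i
    have hz : ∀ i, i ∈ A ∪ B → f i = 0 := by
      intro i hi
      have := hf' i
      simp [hi] at this
      exact this
    have hh : ∀ i, i ∉ A ∪ B → f i = ∑ j, P i j * f j := by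
      intro i hi
      have := hf' i
      simp only [hi, if_false, sub_eq_zero] at this
      exact this
    funext i
    exact committor_homog_zero P A B hP0 hP1 hirr hA f hz hh i
  have hTsurj : Function.Surjective T :=
    (LinearMap.injective_iff_surjective).mp hTinj
  obtain ⟨q, hq⟩ := hTsurj (fun i => if i ∈ B then 1 else 0)
  have hq' : ∀ i, q i - (if i ∈ A ∪ B then 0 else ∑ j, P i j * q j)
      = (if i ∈ B then 1 else 0) := fun i => congrFun hq i
  refine ⟨q, ⟨?_, ?_, ?_⟩, ?_⟩
  · intro i hi
    have hiAB : i ∈ A ∪ B := mem_union_left B hi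
    have hiB : i ∉ B := Finset.disjoint_left.mp hAB hi
    have := hq' i
    simp [hiAB, hiB] at this
    exact this
  · intro i hi
    have hiAB : i ∈ A ∪ B := mem_union_right A hi
    have := hq' i
    simp [hiAB, hi] at this
    exact this
  · intro i hiA hiB
    have hiAB : i ∉ A ∪ B := by simp [hiA, hiB]
    have := hq' i
    simp only [hiAB, if_false, hiB, sub_eq_zero] at this
    exact this
  · rintro q' ⟨hq'A, hq'B, hq'C⟩
    have hqA : ∀ i ∈ A, q i = 0 := by
      intro i hi
      have hiAB : i ∈ A ∪ B := mem_union_left B hi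
      have hiB : i ∉ B := Finset.disjoint_left.mp hAB hi
      have := hq' i
      simp [hiAB, hiB] at this
      exact this
    have hqB : ∀ i ∈ B, q i = 1 := by
      intro i hi
      have hiAB : i ∈ A ∪ B := mem_union_right A hi
      have := hq' i
      simp [hiAB, hi] at this
      exact this
    have hqC : ∀ i, i ∉ A → i ∉ B → q i = ∑ j, P i j * q j := by
      intro i hiA hiB
      have hiAB : i ∉ A ∪ B := by simp [hiA, hiB]
      have := hq' i
      simp only [hiAB, if_false, hiB, sub_eq_zero] at this
      exact this
    have hd : ∀ i, q' i - q i = 0 := by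
      apply committor_homog_zero P A B hP0 hP1 hirr hA
      · intro i hi
        rcases Finset.mem_union.mp hi with h | h
        · rw [hq'A i h, hqA i h, sub_zero]
        · rw [hq'B i h, hqB i h, sub_self]
      · intro i hi
        have hiA : i ∉ A := fun h => hi (mem_union_left B h)
        have hiB : i ∉ B := fun h => hi (mem_union_right A h)
        rw [hq'C i hiA hiB, hqC i hiA hiB, ← Finset.sum_sub_distrib]
        exact Finset.sum_congr rfl (fun j _ => by ring)
    funext i
    have := hd i
    linarith
end

section
/- For a finite irreducible Markov chain, the total reactive current out of A equals the total reactive current into B: ∑_{i∈A, j∈S} f^{AB}_{ij} = ∑_{i∈S, j∈B} f^{AB}_{ij}, where f^{AB}_{ij} = q⁻_i π_i P_{ij} q⁺_j. -/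
/-- The total reactive current out of `A` equals the total reactive
current into `B`, where `f^{AB}_{ij} = q⁻_i π_i P_{ij} q⁺_j`. -/
theorem reactive_current_A_eq_B {S : Type*} [Fintype S]
    (P : S → S → ℝ) (π : S → ℝ) (A B : Finset S) (qp qm : S → ℝ)
    (hP0 : ∀ i j, 0 ≤ P i j) (hP1 : ∀ i, ∑ j, P i j = 1)
    (hirr : ∀ i j : S, Relation.ReflTransGen (fun a b => 0 < P a b) i j)
    (hπpos : ∀ i, 0 < π i) (hπ1 : ∑ i, π i = 1)
    (hstat : ∀ j, ∑ i, π i * P i j = π j)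
    (hAB : Disjoint A B) (hA : A.Nonempty) (hB : B.Nonempty)
    (hone : ∀ i ∈ A, ∀ j ∈ B, P i j = 0 ∧ P j i = 0)
    (hqpA : ∀ i ∈ A, qp i = 0) (hqpB : ∀ i ∈ B, qp i = 1)
    (hqph : ∀ i, i ∉ A → i ∉ B → qp i = ∑ j, P i j * qp j)
    (hqmA : ∀ i ∈ A, qm i = 1) (hqmB : ∀ i ∈ B, qm i = 0)
    (hqmh : ∀ i, i ∉ A → i ∉ B → qm i = ∑ j, (π j / π i) * P j i * qm j) :
    ∑ i ∈ A, ∑ j, qm i * π i * P i j * qp j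
      = ∑ i, ∑ j ∈ B, qm i * π i * P i j * qp j := by
  classical
  set f : S → S → ℝ := fun i j => qm i * π i * P i j * qp j with hf
  set F : S → ℝ := fun i => (∑ j, f i j) - (∑ j, f j i) with hF
  -- total sum of F is zero
  have htot : ∑ i, F i = 0 := by
    simp only [hF, Finset.sum_sub_distrib]
    rw [Finset.sum_comm]
    ring
  -- F vanishes outside A ∪ B
  have hmid : ∀ i, i ∉ A → i ∉ B → F i = 0 := by
    intro i hiA hiB
    have hπne : π i ≠ 0 := (hπpos i).ne'
    have h1 : ∑ j, f i j = qm i * π i * qp i := by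
      have : ∑ j, f i j = qm i * π i * ∑ j, P i j * qp j := by
        rw [Finset.mul_sum]
        exact Finset.sum_congr rfl fun j _ => by simp only [hf]; ring
      rw [this, ← hqph i hiA hiB]
    have h2 : ∑ j, f j i = qm i * π i * qp i := by
      have : ∑ j, f j i = qp i * π i * ∑ j, (π j / π i) * P j i * qm j := by
        rw [Finset.mul_sum]
        refine Finset.sum_congr rfl fun j _ => ?_
        simp only [hf]
        field_simp
      rw [this, ← hqmh i hiA hiB]
      ring
    simp only [hF, h1, h2, sub_self]
  have hAB0 : ∑ i ∈ A ∪ B, F i = 0 := by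
    rw [← htot]
    refine Finset.sum_subset ((A ∪ B).subset_univ) fun x _ hx => ?_
    rw [Finset.mem_union] at hx
    push_neg at hx
    exact hmid x hx.1 hx.2
  rw [Finset.sum_union hAB] at hAB0
  -- on A, F i = outflow; on B, F i = - inflow
  have hFA : ∑ i ∈ A, F i = ∑ i ∈ A, ∑ j, f i j := by
    refine Finset.sum_congr rfl fun i hi => ?_
    have : ∑ j, f j i = 0 := by
      refine Finset.sum_eq_zero fun j _ => ?_
      simp [hf, hqpA i hi]
    simp [hF, this]
  have hFB : ∑ i ∈ B, F i = -∑ i ∈ B, ∑ j, f j i := by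
    rw [← Finset.sum_neg_distrib]
    refine Finset.sum_congr rfl fun i hi => ?_
    have : ∑ j, f i j = 0 := by
      refine Finset.sum_eq_zero fun j _ => ?_
      simp [hf, hqmB i hi]
    simp [hF, this]
  rw [hFA, hFB] at hAB0
  have key : ∑ i ∈ A, ∑ j, f i j = ∑ i ∈ B, ∑ j, f j i := by linarith
  calc ∑ i ∈ A, ∑ j, f i j = ∑ i ∈ B, ∑ j, f j i := key
    _ = ∑ i, ∑ j ∈ B, f i j := Finset.sum_comm
end
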